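/- arXiv:2603.08050 — 4 statements merged into one kernel-verified Lean document; each statement's English description precedes it below -/
import Mathlib

section
/- Let $r>0$, $T>0$, $\varepsilon_0>\varepsilon_1\ge 0$, and let $\phi_1:[0,T]\to\mathbb{R}$ be continuously differentiable and strictly positive with $-\phi_1'(t)+r\,\phi_1(t)<\varepsilon_0-\varepsilon_1$ for all $t\in[0,T]$ and $\phi_1(0)<(\varepsilon_0-\varepsilon_1)\frac{1-e^{-rT}}{r}$. Then there exists a unique $t_1\in(0,T)$ such that $\phi_1(t)<\mathscr{E}(t)$ for all $t\in[0,t_1)$, $\phi_1(t_1)=\mathscr{E}(t_1)$, and $\phi_1(t)>\mathscr{E}(t)$ for all $t\in(t_1,T]$. -/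
/-!
Discounting turns the comparison of `φ1` with `𝓔` into a monotone one. The present value
`𝓔` solves `𝓔' = r 𝓔 - (ε0 - ε1)`, so `d := φ1 - 𝓔` satisfies `d' - r d = φ1' - r φ1 + (ε0 - ε1) > 0`,
which says exactly that `e^{-rt} d(t)` is strictly increasing on `[0, T]`. It is negative at `0`
by the initial condition and positive at `T`, where `𝓔(T) = 0 < φ1(T)`; the intermediate value
theorem and strict monotonicity give the unique crossing.
-/

open Real Set

/-- The paper's `𝓔(t)` is `annuityValue (ε0 - ε1) r T t`. At `r = 0` this is `0`, not the limit
`c (T - t)`. -/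
noncomputable def annuityValue (c r T t : ℝ) : ℝ :=
  c * (1 - exp (-(r * (T - t)))) / r

theorem annuityValue_self (c r T : ℝ) : annuityValue c r T T = 0 := by
  simp [annuityValue]

theorem hasDerivAt_annuityValue {r : ℝ} (hr : r ≠ 0) (c T t : ℝ) :
    HasDerivAt (annuityValue c r T) (r * annuityValue c r T t - c) t := by
  have hlin : HasDerivAt (fun s : ℝ => -(r * (T - s))) r t := by
    simpa using (((hasDerivAt_id t).const_sub T).const_mul r).fun_neg
  refine (((hlin.exp.const_sub 1).const_mul c).div_const r).congr_deriv ?_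
  simp only [annuityValue]
  field_simp
  ring

theorem hasDerivAt_exp_neg_mul_mul {d : ℝ → ℝ} {d' r t : ℝ} (hd : HasDerivAt d d' t) :
    HasDerivAt (fun s => exp (-(r * s)) * d s) (exp (-(r * t)) * (d' - r * d t)) t := by
  have hexp : HasDerivAt (fun s => exp (-(r * s))) (exp (-(r * t)) * -r) t := by
    simpa using ((hasDerivAt_id t).const_mul r).fun_neg.exp
  exact (hexp.mul hd).congr_deriv (by ring)

theorem strictMonoOn_exp_neg_mul_mul {d d' : ℝ → ℝ} {r a b : ℝ}
    (hd : ∀ t ∈ Icc a b, HasDerivAt d (d' t) t) (hgt : ∀ t ∈ Icc a b, r * d t < d' t) :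
    StrictMonoOn (fun t => exp (-(r * t)) * d t) (Icc a b) := by
  have hderiv : ∀ t ∈ Icc a b, HasDerivAt (fun s => exp (-(r * s)) * d s)
      (exp (-(r * t)) * (d' t - r * d t)) t :=
    fun t ht => hasDerivAt_exp_neg_mul_mul (hd t ht)
  refine strictMonoOn_of_hasDerivWithinAt_pos (convex_Icc a b) (HasDerivAt.continuousOn hderiv)
    (fun t ht => (hderiv t (interior_subset ht)).hasDerivWithinAt) fun t ht => ?_
  exact mul_pos (exp_pos _) (sub_pos.2 (hgt t (interior_subset ht)))

def IsUpcrossingOn (f g : ℝ → ℝ) (a b c : ℝ) : Prop :=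
  c ∈ Ioo a b ∧ (∀ t ∈ Ico a c, f t < g t) ∧ f c = g c ∧ ∀ t ∈ Ioc c b, g t < f t

theorem existsUnique_isUpcrossingOn_of_strictMonoOn {f g : ℝ → ℝ} {a b : ℝ} (hab : a ≤ b)
    (hcont : ContinuousOn (fun t => f t - g t) (Icc a b))
    (hmono : StrictMonoOn (fun t => f t - g t) (Icc a b)) (ha : f a < g a) (hb : g b < f b) :
    ∃! c, IsUpcrossingOn f g a b c := by
  obtain ⟨c, hc, hzero⟩ : ∃ c ∈ Ioo a b, f c - g c = 0 :=
    intermediate_value_Ioo hab hcont ⟨sub_neg.2 ha, sub_pos.2 hb⟩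
  have hcI : c ∈ Icc a b := Ioo_subset_Icc_self hc
  refine ⟨c, ⟨hc, fun t ht => ?_, sub_eq_zero.1 hzero, fun t ht => ?_⟩, ?_⟩
  · have := hmono ⟨ht.1, ht.2.le.trans hcI.2⟩ hcI ht.2
    simp only [hzero] at this
    exact sub_neg.1 this
  · have := hmono hcI ⟨hcI.1.trans ht.1.le, ht.2⟩ ht.1
    simp only [hzero] at this
    exact sub_pos.1 this
  · rintro c' ⟨hc', -, hzero', -⟩
    exact hmono.injOn (Ioo_subset_Icc_self hc') hcI (by simp only [hzero', hzero, sub_self])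

theorem isUpcrossingOn_mul_left_iff {f g w : ℝ → ℝ} {a b c : ℝ} (hw : ∀ t ∈ Icc a b, 0 < w t) :
    IsUpcrossingOn (fun t => w t * f t) (fun t => w t * g t) a b c ↔
      IsUpcrossingOn f g a b c := by
  unfold IsUpcrossingOn
  refine and_congr_right fun hc => ?_
  have hcI : c ∈ Icc a b := Ioo_subset_Icc_self hc
  refine and_congr (forall₂_congr fun t ht => ?_) (and_congr ?_ (forall₂_congr fun t ht => ?_))
  · exact mul_lt_mul_iff_right₀ (hw t ⟨ht.1, ht.2.le.trans hcI.2⟩)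
  · exact mul_right_inj' (hw c hcI).ne'
  · exact mul_lt_mul_iff_right₀ (hw t ⟨hcI.1.trans ht.1.le, ht.2⟩)

theorem stmt1_general (r T ε0 ε1 : ℝ) (φ1 φ1' : ℝ → ℝ)
    (hr : 0 < r) (hT : 0 < T)
    (hpos : ∀ t ∈ Icc (0:ℝ) T, 0 < φ1 t)
    (hderiv : ∀ t ∈ Icc (0:ℝ) T, HasDerivAt φ1 (φ1' t) t)
    (hcost : ∀ t ∈ Icc (0:ℝ) T, -φ1' t + r * φ1 t < ε0 - ε1)
    (hinit : φ1 0 < (ε0 - ε1) * (1 - Real.exp (-(r * T))) / r) :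
    ∃! t1 : ℝ, t1 ∈ Ioo 0 T ∧
      (∀ t ∈ Ico (0:ℝ) t1,
        φ1 t < (ε0 - ε1) * (1 - Real.exp (-(r * (T - t)))) / r) ∧
      φ1 t1 = (ε0 - ε1) * (1 - Real.exp (-(r * (T - t1)))) / r ∧
      (∀ t ∈ Ioc t1 T,
        (ε0 - ε1) * (1 - Real.exp (-(r * (T - t)))) / r < φ1 t) := by
  let E := annuityValue (ε0 - ε1) r T
  have hgap : ∀ t ∈ Icc (0:ℝ) T,
      HasDerivAt (fun s => φ1 s - E s) (φ1' t - (r * E t - (ε0 - ε1))) t :=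
    fun t ht => (hderiv t ht).sub (hasDerivAt_annuityValue hr.ne' _ _ _)
  have hmono := strictMonoOn_exp_neg_mul_mul (r := r) hgap fun t ht => by linarith [hcost t ht]
  have hcont : ContinuousOn (fun t => exp (-(r * t)) * (φ1 t - E t)) (Icc 0 T) :=
    HasDerivAt.continuousOn fun t ht => hasDerivAt_exp_neg_mul_mul (hgap t ht)
  have hstart : φ1 0 < E 0 := by simpa [E, annuityValue] using hinit
  have hend : E T < φ1 T := by simpa [E, annuityValue_self] using hpos T ⟨hT.le, le_rfl⟩
  have key := existsUnique_isUpcrossingOn_of_strictMonoOn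
    (f := fun t => exp (-(r * t)) * φ1 t) (g := fun t => exp (-(r * t)) * E t) hT.le
    (by simpa only [mul_sub] using hcont) (by simpa only [mul_sub] using hmono)
    (mul_lt_mul_of_pos_left hstart (exp_pos _)) (mul_lt_mul_of_pos_left hend (exp_pos _))
  exact (existsUnique_congr fun c => isUpcrossingOn_mul_left_iff fun t _ => exp_pos _).mp key

/-- Under Assumption 2(ii) there is a unique crossing time `t1 ∈ (0,T)` of the
switching cost `φ1` and the present-value income gain `𝓔(t) = (ε0-ε1)(1-e^{-r(T-t)})/r`. -/
theorem stmt1 (r T ε0 ε1 : ℝ) (φ1 φ1' : ℝ → ℝ)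
    (hr : 0 < r) (hT : 0 < T) (hε1 : 0 ≤ ε1) (hε : ε1 < ε0)
    (hpos : ∀ t ∈ Icc (0:ℝ) T, 0 < φ1 t)
    (hderiv : ∀ t ∈ Icc (0:ℝ) T, HasDerivAt φ1 (φ1' t) t)
    (hcont : ContinuousOn φ1' (Icc 0 T))
    (hcost : ∀ t ∈ Icc (0:ℝ) T, -φ1' t + r * φ1 t < ε0 - ε1)
    (hinit : φ1 0 < (ε0 - ε1) * (1 - Real.exp (-(r * T))) / r) :
    ∃! t1 : ℝ, t1 ∈ Ioo 0 T ∧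
      (∀ t ∈ Ico (0:ℝ) t1,
        φ1 t < (ε0 - ε1) * (1 - Real.exp (-(r * (T - t)))) / r) ∧
      φ1 t1 = (ε0 - ε1) * (1 - Real.exp (-(r * (T - t1)))) / r ∧
      (∀ t ∈ Ioc t1 T,
        (ε0 - ε1) * (1 - Real.exp (-(r * (T - t)))) / r < φ1 t) :=
  stmt1_general r T ε0 ε1 φ1 φ1' hr hT hpos hderiv hcost hinit
end

section
/- Let $\theta\in\mathbb{R}$, $\beta>0$, $r>0$, $q\ge0$, $\gamma_1>0$, and set $k:=2\big(\tfrac{2}{\gamma_1^2}+\tfrac{1}{\gamma_1}\big)\theta^2+\tfrac{4}{\gamma_1}(\beta+r)-r+4q+2$. For $x_0\in\mathbb{R}$ define $\Phi(\tau,x):=e^{k\tau}\big(e^{\frac{2}{\gamma_1}|x-x_0|}-\tfrac{2}{\gamma_1}|x-x_0|-1\big)$. Then for every $x_0\in\mathbb{R}$ and every $(\tau,x)\in\mathbb{R}^2$ with $x\ne x_0$, $\partial_\tau\Phi(\tau,x)-\tfrac{\theta^2}{2}\partial_{xx}\Phi(\tau,x)-\big(\beta-r+\tfrac{\theta^2}{2}\big)\partial_x\Phi(\tau,x)+r\,\Phi(\tau,x)\;\ge\;e^{k\tau}\Big[-(k+r)\,\mathbf{1}_{\{|x-x_0|\le\gamma_1\}}+(2q+1)\,e^{\frac{2}{\gamma_1}|x-x_0|}\Big]$.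 -/
/-!
Write `t = (2/γ1)|x - x0|`. Away from `x0` the barrier is locally `e^{kτ}(e^{c(z-x0)} - c(z-x0) - 1)`
with `c = ±2/γ1`, so `∂_τ Φ = kΦ` and the spatial derivatives are explicit. After dividing by `e^{kτ}`,
the choice of `k` gives `k + r = 2C` with `C = (θ²/2)a² + (β+r+θ²/2)a + 2q+1 ≥ 0` (`a = 2/γ1`), and
bounding the drift by `(β+r+θ²/2)a(e^t - 1)` reduces the claim to `C(e^t - 2t - 2 + 2·1_{t ≤ 2}) ≥ 0`,
i.e. to `e^t ≥ 2t` for `t ≤ 2` and `e^t ≥ 2t + 2` for `t > 2`.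
-/

open Real Set

noncomputable def Phi (k γ1 x0 τ x : ℝ) : ℝ :=
  Real.exp (k * τ) * (Real.exp (2 / γ1 * |x - x0|) - 2 / γ1 * |x - x0| - 1)

open Filter Topology

namespace Real

theorem two_mul_add_two_le_exp {t : ℝ} (ht : 2 ≤ t) : 2 * t + 2 ≤ exp t := by
  have hcubic := sum_le_exp_of_nonneg (by linarith : (0 : ℝ) ≤ t) 4
  simp only [Finset.sum_range_succ, Finset.range_one, Finset.sum_singleton] at hcubic
  norm_num [Nat.factorial] at hcubic
  nlinarith [mul_le_mul ht ht (by norm_num) (by linarith)]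

end Real

theorem hasDerivAt_exp_mul_sub_mul_sub_one (c x0 z : ℝ) :
    HasDerivAt (fun z => exp (c * (z - x0)) - c * (z - x0) - 1)
      (c * (exp (c * (z - x0)) - 1)) z := by
  have hlin : HasDerivAt (fun z => c * (z - x0)) c z := by
    simpa using ((hasDerivAt_id z).sub_const x0).const_mul c
  exact ((hlin.exp.sub hlin).sub_const 1).congr_deriv (by ring)

theorem eventually_abs_sub_eq_mul {x x0 : ℝ} (hx : x ≠ x0) :
    ∃ s : ℝ, |s| = 1 ∧ ∀ᶠ z in 𝓝 x, |z - x0| = s * (z - x0) := by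
  rcases hx.lt_or_gt with hlt | hgt
  · refine ⟨-1, by norm_num, ?_⟩
    filter_upwards [isOpen_Iio.mem_nhds hlt] with z hz
    rw [abs_of_neg (sub_neg.mpr hz)]
    ring
  · refine ⟨1, by norm_num, ?_⟩
    filter_upwards [isOpen_Ioi.mem_nhds hgt] with z hz
    rw [abs_of_pos (sub_pos.mpr hz)]
    ring

section Phi

variable (k γ1 x0 τ x : ℝ)

theorem deriv_Phi_time : deriv (fun t => Phi k γ1 x0 t x) τ = k * Phi k γ1 x0 τ x := by
  have h := (((hasDerivAt_id τ).const_mul k).exp).mul_const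
    (exp (2 / γ1 * |x - x0|) - 2 / γ1 * |x - x0| - 1)
  simp only [id_eq, mul_one] at h
  rw [Phi, ← mul_assoc, mul_comm k]
  exact h.deriv

variable {k γ1 x0 τ x}

theorem deriv_Phi_space_of_eventually {s : ℝ} (hs : ∀ᶠ z in 𝓝 x, |z - x0| = s * (z - x0)) :
    deriv (fun z => Phi k γ1 x0 τ z) x
        = exp (k * τ) * ((2 / γ1 * s) * (exp (2 / γ1 * |x - x0|) - 1)) ∧
      deriv (deriv (fun z => Phi k γ1 x0 τ z)) x
        = exp (k * τ) * ((2 / γ1 * s) ^ 2 * exp (2 / γ1 * |x - x0|)) := by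
  set c := 2 / γ1 * s
  have hloc : (fun z => Phi k γ1 x0 τ z)
      =ᶠ[𝓝 x] fun z => exp (k * τ) * (exp (c * (z - x0)) - c * (z - x0) - 1) := by
    filter_upwards [hs] with z hz
    simp only [Phi, hz, c, mul_assoc]
  have hd (z : ℝ) := (hasDerivAt_exp_mul_sub_mul_sub_one c x0 z).const_mul (exp (k * τ))
  have hd2 : HasDerivAt (fun z => exp (k * τ) * (c * (exp (c * (z - x0)) - 1)))
      (exp (k * τ) * (c ^ 2 * exp (c * (x - x0)))) x := by
    refine (((((hasDerivAt_id x).sub_const x0).const_mul c).exp.sub_const 1).const_mul c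
      |>.const_mul (exp (k * τ))).congr_deriv ?_
    simp only [id_eq]
    ring
  have hx : 2 / γ1 * |x - x0| = c * (x - x0) := by rw [hs.self_of_nhds]; ring
  rw [hx, hloc.deriv_eq, (hd x).deriv, hloc.deriv.deriv_eq, funext fun z => (hd z).deriv, hd2.deriv]
  exact ⟨rfl, rfl⟩

end Phi

theorem barrier_reduced_inequality {θ β r q k a s t : ℝ} (hβ : 0 < β) (hr : 0 < r) (hq : 0 ≤ q)
    (ha : 0 < a) (hs : |s| = 1) (ht : 0 ≤ t)
    (hk : k = θ ^ 2 * a ^ 2 + 2 * (β + r + θ ^ 2 / 2) * a + 4 * q + 2 - r) :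
    -(k + r) * (if t ≤ 2 then (1 : ℝ) else 0) + (2 * q + 1) * exp t
      ≤ k * (exp t - t - 1) - θ ^ 2 / 2 * ((a * s) ^ 2 * exp t)
        - (β - r + θ ^ 2 / 2) * ((a * s) * (exp t - 1)) + r * (exp t - t - 1) := by
  subst hk
  have hdrift : (β - r + θ ^ 2 / 2) * ((a * s) * (exp t - 1))
      ≤ (β + r + θ ^ 2 / 2) * (a * (exp t - 1)) := by
    have hcoef : (β - r + θ ^ 2 / 2) * s ≤ β + r + θ ^ 2 / 2 := by
      calc (β - r + θ ^ 2 / 2) * s ≤ |β - r + θ ^ 2 / 2| * |s| := by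
            rw [← abs_mul]; exact le_abs_self _
        _ ≤ β + r + θ ^ 2 / 2 := by
          rw [hs, mul_one, abs_le]; constructor <;> nlinarith [sq_nonneg θ]
    have hE : 0 ≤ a * (exp t - 1) := mul_nonneg ha.le (by linarith [add_one_le_exp t])
    calc (β - r + θ ^ 2 / 2) * ((a * s) * (exp t - 1))
        = ((β - r + θ ^ 2 / 2) * s) * (a * (exp t - 1)) := by ring
      _ ≤ (β + r + θ ^ 2 / 2) * (a * (exp t - 1)) := mul_le_mul_of_nonneg_right hcoef hE
  have hC : 0 ≤ θ ^ 2 / 2 * a ^ 2 + (β + r + θ ^ 2 / 2) * a + (2 * q + 1) := by positivity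
  have hBa : 0 ≤ (β + r + θ ^ 2 / 2) * a := by positivity
  rw [mul_pow, ← sq_abs s, hs]
  split_ifs with h2
  · nlinarith [mul_le_mul_of_nonneg_left (two_mul_le_exp (x := t)) hC]
  · nlinarith [mul_le_mul_of_nonneg_left (two_mul_add_two_le_exp (not_le.mp h2).le) hC]

/-- The barrier `Φ` satisfies
`∂_τ Φ - (θ²/2) ∂_{xx} Φ - (β-r+θ²/2) ∂_x Φ + r Φ
  ≥ e^{kτ}[-(k+r) 1_{|x-x0|≤γ1} + (2q+1) e^{(2/γ1)|x-x0|}]` away from `x = x0`. -/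
theorem stmt8 (θ β r q γ1 k : ℝ)
    (hβ : 0 < β) (hr : 0 < r) (hq : 0 ≤ q) (hγ1 : 0 < γ1)
    (hk : k = 2 * (2 / γ1 ^ 2 + 1 / γ1) * θ ^ 2 + 4 / γ1 * (β + r) - r + 4 * q + 2) :
    ∀ x0 τ x : ℝ, x ≠ x0 →
      deriv (fun t => Phi k γ1 x0 t x) τ
        - θ ^ 2 / 2 * deriv (deriv (fun z => Phi k γ1 x0 τ z)) x
        - (β - r + θ ^ 2 / 2) * deriv (fun z => Phi k γ1 x0 τ z) x
        + r * Phi k γ1 x0 τ x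
      ≥ Real.exp (k * τ) *
          (-(k + r) * (if |x - x0| ≤ γ1 then (1:ℝ) else 0)
            + (2 * q + 1) * Real.exp (2 / γ1 * |x - x0|)) := by
  intro x0 τ x hx
  obtain ⟨s, hs, hloc⟩ := eventually_abs_sub_eq_mul hx
  obtain ⟨hd1, hd2⟩ := deriv_Phi_space_of_eventually (k := k) (γ1 := γ1) (τ := τ) hloc
  have hk' : k = θ ^ 2 * (2 / γ1) ^ 2 + 2 * (β + r + θ ^ 2 / 2) * (2 / γ1) + 4 * q + 2 - r := by
    rw [hk]; field_simp; ring
  have hind : |x - x0| ≤ γ1 ↔ 2 / γ1 * |x - x0| ≤ 2 := by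
    rw [div_mul_eq_mul_div, div_le_iff₀ hγ1]; constructor <;> intro <;> linarith
  have key := barrier_reduced_inequality hβ hr hq (by positivity : 0 < 2 / γ1) hs
    (by positivity : 0 ≤ 2 / γ1 * |x - x0|) hk'
  rw [ge_iff_le, deriv_Phi_time, hd1, hd2, Phi, if_congr hind rfl rfl]
  calc _ ≤ exp (k * τ) * _ := mul_le_mul_of_nonneg_left key (exp_pos _).le
    _ = _ := by ring
end

section
/- Let $r>0$, $T>0$, $q>0$, $\varepsilon_0>\varepsilon_1\ge0$, and let $\psi_0,\psi_1:[0,T]\to(0,\infty)$ be continuously differentiable with $|\psi_1'(\tau)|\le q$ for all $\tau\in[0,T]$. Let $\varepsilon>0$ satisfy $\varepsilon<\psi_0(\tau)$ and $\varepsilon<\psi_1(\tau)$ for all $\tau\in[0,T]$, and let $\beta_0,\beta_1:\mathbb{R}\to\mathbb{R}$ satisfy $\beta_0\ge0$ with $\beta_0(\lambda)=0$ whenever $\lambda\ge\varepsilon$, and $\beta_1\le0$ with $\beta_1(0)=-(\varepsilon_0-\varepsilon_1)-q$. Define $\rho_1(\tau):=\min\{\mathcal{E}(\tau),\psi_1(\tau)\}$.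 Then for every $\tau\in(0,T)$ with $\mathcal{E}(\tau)\ne\psi_1(\tau)$, $\rho_1$ is differentiable at $\tau$ and $\rho_1'(\tau)+r\,\rho_1(\tau)-\beta_0\big(\rho_1(\tau)+\psi_0(\tau)\big)-\beta_1\big(\rho_1(\tau)-\psi_1(\tau)\big)\;\ge\;\varepsilon_0-\varepsilon_1$. -/
open Real Set

/-! Away from the kink, `ρ₁ = min {𝓔, ψ₁}` coincides near `τ` with one of its two branches, so it is
differentiable there. On the branch `ρ₁ = 𝓔` the identity `𝓔' + r 𝓔 = ε₀ - ε₁` gives the bound, since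
`β₀` vanishes (`𝓔 ≥ 0` and `ψ₀ > ε`) and `β₁ ≤ 0`. On the branch `ρ₁ = ψ₁` the penalty `β₁(0)`
contributes exactly `ε₀ - ε₁ + q`, which absorbs `ψ₁' ≥ -q`, while `r ψ₁ > 0`. -/

theorem HasDerivAt.min_of_lt {f g : ℝ → ℝ} {f' x : ℝ} (hf : HasDerivAt f f' x)
    (hg : ContinuousAt g x) (hlt : f x < g x) :
    HasDerivAt (fun s => min (f s) (g s)) f' x := by
  refine hf.congr_of_eventuallyEq ?_
  filter_upwards [hf.continuousAt.eventually_lt hg hlt] with s hs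
  exact min_eq_left hs.le

theorem HasDerivAt.min_of_gt {g f : ℝ → ℝ} {g' x : ℝ} (hg : HasDerivAt g g' x)
    (hf : ContinuousAt f x) (hgt : g x < f x) :
    HasDerivAt (fun s => min (f s) (g s)) g' x := by
  simpa only [min_comm] using hg.min_of_lt hf hgt

section ExpSaturation

variable (c r : ℝ)

theorem hasDerivAt_mul_one_sub_exp_neg_div (hr : r ≠ 0) (τ : ℝ) :
    HasDerivAt (fun s => c * (1 - exp (-(r * s))) / r) (c * exp (-(r * τ))) τ := by
  have hlin : HasDerivAt (fun s => -(r * s)) (-r) τ := by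
    simpa using ((hasDerivAt_id' τ).const_mul r).fun_neg
  refine ((((hasDerivAt_const τ 1).fun_sub hlin.exp).const_mul c).div_const r).congr_deriv ?_
  field_simp
  ring

theorem mul_exp_neg_add_mul_mul_one_sub_exp_neg_div (hr : r ≠ 0) (τ : ℝ) :
    c * exp (-(r * τ)) + r * (c * (1 - exp (-(r * τ))) / r) = c := by
  field_simp
  ring

theorem mul_one_sub_exp_neg_div_nonneg {c r τ : ℝ} (hc : 0 ≤ c) (hr : 0 < r) (hτ : 0 ≤ τ) :
    0 ≤ c * (1 - exp (-(r * τ))) / r := by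
  have : exp (-(r * τ)) ≤ 1 := exp_le_one_iff.mpr (by nlinarith)
  exact div_nonneg (mul_nonneg hc (by linarith)) hr.le

end ExpSaturation

theorem stmt12_general (r T q ε0 ε1 ε : ℝ) (ψ0 ψ1 ψ1' : ℝ → ℝ) (β0 β1 : ℝ → ℝ)
    (hr : 0 < r) (hε : ε1 < ε0)
    (hψ1pos : ∀ τ ∈ Icc (0:ℝ) T, 0 < ψ1 τ)
    (hψ1deriv : ∀ τ ∈ Icc (0:ℝ) T, HasDerivAt ψ1 (ψ1' τ) τ)
    (hψ1'bd : ∀ τ ∈ Icc (0:ℝ) T, |ψ1' τ| ≤ q)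
    (hεψ0 : ∀ τ ∈ Icc (0:ℝ) T, ε < ψ0 τ)
    (hβ0zero : ∀ l : ℝ, ε ≤ l → β0 l = 0)
    (hβ1nonpos : ∀ l : ℝ, β1 l ≤ 0)
    (hβ1zero : β1 0 = -(ε0 - ε1) - q) :
    ∀ τ ∈ Ioo (0:ℝ) T,
      (ε0 - ε1) * (1 - Real.exp (-(r * τ))) / r ≠ ψ1 τ →
      DifferentiableAt ℝ
        (fun s => min ((ε0 - ε1) * (1 - Real.exp (-(r * s))) / r) (ψ1 s)) τ ∧
      deriv (fun s => min ((ε0 - ε1) * (1 - Real.exp (-(r * s))) / r) (ψ1 s)) τ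
        + r * min ((ε0 - ε1) * (1 - Real.exp (-(r * τ))) / r) (ψ1 τ)
        - β0 (min ((ε0 - ε1) * (1 - Real.exp (-(r * τ))) / r) (ψ1 τ) + ψ0 τ)
        - β1 (min ((ε0 - ε1) * (1 - Real.exp (-(r * τ))) / r) (ψ1 τ) - ψ1 τ)
      ≥ ε0 - ε1 := by
  intro τ hτ hne
  have hτI : τ ∈ Icc 0 T := Ioo_subset_Icc_self hτ
  have hE := hasDerivAt_mul_one_sub_exp_neg_div (ε0 - ε1) r hr.ne' τ
  have hE0 := mul_one_sub_exp_neg_div_nonneg (sub_nonneg.mpr hε.le) hr hτ.1.le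
  have hψ1 := hψ1deriv τ hτI
  suffices ∃ ρ', HasDerivAt (fun s => min ((ε0 - ε1) * (1 - exp (-(r * s))) / r) (ψ1 s)) ρ' τ ∧
      ρ' + r * min ((ε0 - ε1) * (1 - exp (-(r * τ))) / r) (ψ1 τ)
        - β0 (min ((ε0 - ε1) * (1 - exp (-(r * τ))) / r) (ψ1 τ) + ψ0 τ)
        - β1 (min ((ε0 - ε1) * (1 - exp (-(r * τ))) / r) (ψ1 τ) - ψ1 τ) ≥ ε0 - ε1 by
    obtain ⟨ρ', hρ, hbound⟩ := this
    exact ⟨hρ.differentiableAt, hρ.deriv ▸ hbound⟩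
  rcases hne.lt_or_gt with hlt | hgt
  · refine ⟨_, hE.min_of_lt hψ1.continuousAt hlt, ?_⟩
    rw [min_eq_left hlt.le, hβ0zero _ (by linarith [hεψ0 τ hτI]),
      mul_exp_neg_add_mul_mul_one_sub_exp_neg_div _ _ hr.ne']
    linarith [hβ1nonpos ((ε0 - ε1) * (1 - exp (-(r * τ))) / r - ψ1 τ)]
  · refine ⟨_, hψ1.min_of_gt hE.continuousAt hgt, ?_⟩
    rw [min_eq_right hgt.le, hβ0zero _ (by linarith [hεψ0 τ hτI, hψ1pos τ hτI]), sub_self,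
      hβ1zero]
    have hψ1'lb : -q ≤ ψ1' τ := (abs_le.mp (hψ1'bd τ hτI)).1
    nlinarith [hψ1pos τ hτI]

/-- The upper lateral boundary datum `ρ1 = min{𝓔, ψ1}` is, away from the kink
`𝓔(τ) = ψ1(τ)`, differentiable and a supersolution of the penalized equation:
`ρ1' + r ρ1 - β0(ρ1+ψ0) - β1(ρ1-ψ1) ≥ ε0 - ε1`. Here `𝓔(τ) = (ε0-ε1)(1-e^{-rτ})/r`. -/
theorem stmt12 (r T q ε0 ε1 ε : ℝ) (ψ0 ψ1 ψ0' ψ1' : ℝ → ℝ) (β0 β1 : ℝ → ℝ)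
    (hr : 0 < r) (hT : 0 < T) (hq : 0 < q) (hε1 : 0 ≤ ε1) (hε : ε1 < ε0)
    (hψ0pos : ∀ τ ∈ Icc (0:ℝ) T, 0 < ψ0 τ)
    (hψ1pos : ∀ τ ∈ Icc (0:ℝ) T, 0 < ψ1 τ)
    (hψ0deriv : ∀ τ ∈ Icc (0:ℝ) T, HasDerivAt ψ0 (ψ0' τ) τ)
    (hψ1deriv : ∀ τ ∈ Icc (0:ℝ) T, HasDerivAt ψ1 (ψ1' τ) τ)
    (hψ0cont : ContinuousOn ψ0' (Icc 0 T))
    (hψ1cont : ContinuousOn ψ1' (Icc 0 T))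
    (hψ1'bd : ∀ τ ∈ Icc (0:ℝ) T, |ψ1' τ| ≤ q)
    (hεpos : 0 < ε)
    (hεψ0 : ∀ τ ∈ Icc (0:ℝ) T, ε < ψ0 τ)
    (hεψ1 : ∀ τ ∈ Icc (0:ℝ) T, ε < ψ1 τ)
    (hβ0nonneg : ∀ l : ℝ, 0 ≤ β0 l)
    (hβ0zero : ∀ l : ℝ, ε ≤ l → β0 l = 0)
    (hβ1nonpos : ∀ l : ℝ, β1 l ≤ 0)
    (hβ1zero : β1 0 = -(ε0 - ε1) - q) :
    ∀ τ ∈ Ioo (0:ℝ) T,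
      (ε0 - ε1) * (1 - Real.exp (-(r * τ))) / r ≠ ψ1 τ →
      DifferentiableAt ℝ
        (fun s => min ((ε0 - ε1) * (1 - Real.exp (-(r * s))) / r) (ψ1 s)) τ ∧
      deriv (fun s => min ((ε0 - ε1) * (1 - Real.exp (-(r * s))) / r) (ψ1 s)) τ
        + r * min ((ε0 - ε1) * (1 - Real.exp (-(r * τ))) / r) (ψ1 τ)
        - β0 (min ((ε0 - ε1) * (1 - Real.exp (-(r * τ))) / r) (ψ1 τ) + ψ0 τ)
        - β1 (min ((ε0 - ε1) * (1 - Real.exp (-(r * τ))) / r) (ψ1 τ) - ψ1 τ)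
      ≥ ε0 - ε1 :=
  stmt12_general r T q ε0 ε1 ε ψ0 ψ1 ψ1' β0 β1 hr hε hψ1pos hψ1deriv hψ1'bd hεψ0 hβ0zero hβ1nonpos
    hβ1zero
end

section
/- Let $r>0$, $T>0$, $q>0$, $\gamma>0$ with $\gamma\ne1$, $\alpha\in(0,1)$, $\gamma_1:=1-\alpha(1-\gamma)$, $0<L_0<L_1$, $\varepsilon_0>\varepsilon_1\ge0$, and $n\in\mathbb{R}$. Let $\psi_0,\psi_1:[0,T]\to(0,\infty)$ be continuously differentiable with $|\psi_0'(\tau)|\le q$ for all $\tau\in[0,T]$. Let $\varepsilon>0$ satisfy $\varepsilon<\psi_1(\tau)$ for all $\tau\in[0,T]$, and let $\beta_0,\beta_1:\mathbb{R}\to\mathbb{R}$ satisfy $\beta_0\ge0$ with $\beta_0(0)=A\,e^{n/\gamma_1}+q$, and $\beta_1(\lambda)=0$ whenever $\lambda\le-\varepsilon$. Define $\mathcal{G}(\tau):=A\,e^{n/\gamma_1}\,\tau$ and $\rho_0(\tau):=\max\{-\mathcal{G}(\tau),-\psi_0(\tau)\}$. Then for every $\tau\in(0,T)$ with $\mathcal{G}(\tau)\ne\psi_0(\tau)$,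 $\rho_0$ is differentiable at $\tau$ and $\rho_0'(\tau)+r\,\rho_0(\tau)-\beta_0\big(\rho_0(\tau)+\psi_0(\tau)\big)-\beta_1\big(\rho_0(\tau)-\psi_1(\tau)\big)\;\le\;-A\,e^{n/\gamma_1}\;\le\;U(x)\quad\text{for every }x\ge-n. -/
open Real Set

/-!
Off the kink, `ρ0` coincides near `τ` with `-𝒢` or with `-ψ0`, so it is differentiable there.
On the branch `ρ0 = -𝒢` the argument of `β1` is below `-ψ1 < -ε`, so `β1` vanishes and the
remaining terms are `≤ 0` beyond `-𝒢' = -A e^{n/γ1}`. On the branch `ρ0 = -ψ0` the argument of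
`β0` is `0`, so `β0` contributes exactly `-(A e^{n/γ1} + q)`, which absorbs `-ψ0' ≤ q`.
Finally `U(x) ≥ -A e^{n/γ1}` for `x ≥ -n` because `A ≥ 0` and `ε0 > ε1`.
-/

theorem rpow_sub_rpow_div_nonneg {a b : ℝ} (ha : 0 < a) (hab : a ≤ b) (p : ℝ) :
    0 ≤ (b ^ p - a ^ p) / p := by
  rcases le_total p 0 with hp | hp
  · exact div_nonneg_of_nonpos (sub_nonpos.2 (rpow_le_rpow_of_nonpos ha hab hp)) hp
  · exact div_nonneg (sub_nonneg.2 (rpow_le_rpow ha.le hab hp)) hp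

theorem one_sub_mul_one_sub_pos {α γ : ℝ} (hγ : 0 < γ) (hα : α ∈ Ioo (0:ℝ) 1) :
    0 < 1 - α * (1 - γ) := by
  nlinarith [hα.1, hα.2]

/-- The exponent `(γ1 - γ)/γ1` and the denominator `1 - γ1` are positive multiples of `1 - γ`,
so the coefficient is nonnegative; it vanishes (through `x / 0 = 0`) when `γ = 1`. -/
theorem div_one_sub_mul_rpow_sub_rpow_nonneg {γ α γ1 L0 L1 : ℝ} (hγ : 0 < γ)
    (hα : α ∈ Ioo (0:ℝ) 1) (hγ1 : γ1 = 1 - α * (1 - γ)) (hL0 : 0 < L0) (hL : L0 ≤ L1) :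
    0 ≤ γ1 / (1 - γ1) * (L1 ^ ((γ1 - γ) / γ1) - L0 ^ ((γ1 - γ) / γ1)) := by
  have hγ1pos : 0 < γ1 := hγ1 ▸ one_sub_mul_one_sub_pos hγ hα
  set p := (γ1 - γ) / γ1
  have hκ : 0 ≤ α * γ1 / (1 - α) := div_nonneg (by nlinarith [hα.1]) (by linarith [hα.2])
  have hden : 1 - γ1 = α * γ1 / (1 - α) * p := by
    have : 1 - α ≠ 0 := by linarith [hα.2]
    simp only [p]; field_simp; rw [hγ1]; ring
  rw [div_mul_eq_mul_div, mul_div_assoc, hden, div_mul_eq_div_div_swap]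
  exact mul_nonneg hγ1pos.le (div_nonneg (rpow_sub_rpow_div_nonneg hL0 hL p) hκ)

theorem HasDerivAt.max_of_lt_left {f g : ℝ → ℝ} {f' x : ℝ} (hf : HasDerivAt f f' x)
    (hg : ContinuousAt g x) (hlt : g x < f x) :
    HasDerivAt (fun y => max (f y) (g y)) f' x :=
  hf.congr_of_eventuallyEq <|
    (hg.eventually_lt hf.continuousAt hlt).mono fun _ hy => max_eq_left hy.le

theorem HasDerivAt.max_of_lt_right {f g : ℝ → ℝ} {g' x : ℝ} (hf : ContinuousAt f x)
    (hg : HasDerivAt g g' x) (hlt : f x < g x) :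
    HasDerivAt (fun y => max (f y) (g y)) g' x := by
  simpa only [max_comm] using hg.max_of_lt_left hf hlt

theorem neg_mul_exp_le_sub_mul_exp {A γ1 n x ε0 ε1 : ℝ} (hA : 0 ≤ A) (hγ1 : 0 < γ1)
    (hx : -n ≤ x) (hε : ε1 < ε0) :
    -(A * exp (n / γ1)) ≤ (ε0 - ε1) - A * exp (-x / γ1) := by
  have : A * exp (-x / γ1) ≤ A * exp (n / γ1) := by gcongr; linarith
  linarith

theorem stmt13_general (r T q γ α γ1 L0 L1 ε0 ε1 n A ε : ℝ)
    (ψ0 ψ1 ψ0' : ℝ → ℝ) (β0 β1 : ℝ → ℝ)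
    (hr : 0 < r)
    (hγ : 0 < γ) (hα : α ∈ Ioo (0:ℝ) 1)
    (hγ1 : γ1 = 1 - α * (1 - γ)) (hL0 : 0 < L0) (hL : L0 < L1)
    (hε : ε1 < ε0)
    (hA : A = γ1 / (1 - γ1) * (L1 ^ ((γ1 - γ) / γ1) - L0 ^ ((γ1 - γ) / γ1)))
    (hψ0pos : ∀ τ ∈ Icc (0:ℝ) T, 0 < ψ0 τ)
    (hψ0deriv : ∀ τ ∈ Icc (0:ℝ) T, HasDerivAt ψ0 (ψ0' τ) τ)
    (hψ0'bd : ∀ τ ∈ Icc (0:ℝ) T, |ψ0' τ| ≤ q)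
    (hεψ1 : ∀ τ ∈ Icc (0:ℝ) T, ε < ψ1 τ)
    (hβ0nonneg : ∀ l : ℝ, 0 ≤ β0 l)
    (hβ0zero : β0 0 = A * Real.exp (n / γ1) + q)
    (hβ1zero : ∀ l : ℝ, l ≤ -ε → β1 l = 0) :
    ∀ τ ∈ Ioo (0:ℝ) T,
      A * Real.exp (n / γ1) * τ ≠ ψ0 τ →
      DifferentiableAt ℝ
        (fun s => max (-(A * Real.exp (n / γ1) * s)) (-ψ0 s)) τ ∧
      deriv (fun s => max (-(A * Real.exp (n / γ1) * s)) (-ψ0 s)) τ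
        + r * max (-(A * Real.exp (n / γ1) * τ)) (-ψ0 τ)
        - β0 (max (-(A * Real.exp (n / γ1) * τ)) (-ψ0 τ) + ψ0 τ)
        - β1 (max (-(A * Real.exp (n / γ1) * τ)) (-ψ0 τ) - ψ1 τ)
      ≤ -(A * Real.exp (n / γ1)) ∧
      ∀ x : ℝ, -n ≤ x →
        -(A * Real.exp (n / γ1)) ≤ (ε0 - ε1) - A * Real.exp (-x / γ1) := by
  intro τ hτ hne
  have hτI : τ ∈ Icc (0:ℝ) T := Ioo_subset_Icc_self hτ
  have hA0 : 0 ≤ A := hA ▸ div_one_sub_mul_rpow_sub_rpow_nonneg hγ hα hγ1 hL0 hL.le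
  have hγ1pos : 0 < γ1 := hγ1 ▸ one_sub_mul_one_sub_pos hγ hα
  have hU := fun (x : ℝ) (hx : -n ≤ x) => neg_mul_exp_le_sub_mul_exp hA0 hγ1pos hx hε
  set c := A * exp (n / γ1)
  have hc : 0 ≤ c := mul_nonneg hA0 (exp_pos _).le
  have hψ0 : HasDerivAt (fun s => -ψ0 s) (-ψ0' τ) τ := (hψ0deriv τ hτI).neg
  have hG : HasDerivAt (fun s => -(c * s)) (-c) τ := by
    simpa using (hasDerivAt_neg' τ).const_mul c
  have hψ0τ := hψ0pos τ hτI
  have hψ1τ := hεψ1 τ hτI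
  rcases hne.lt_or_gt with hlt | hgt
  · have hd := hG.max_of_lt_left hψ0.continuousAt (by linarith)
    refine ⟨hd.differentiableAt, ?_, hU⟩
    have hcτ : 0 ≤ c * τ := mul_nonneg hc hτ.1.le
    rw [hd.deriv, max_eq_left (by linarith), hβ1zero _ (by linarith)]
    linarith [hβ0nonneg (-(c * τ) + ψ0 τ), mul_nonneg hr.le hcτ]
  · have hd := hψ0.max_of_lt_right hG.continuousAt (by linarith)
    refine ⟨hd.differentiableAt, ?_, hU⟩
    rw [hd.deriv, max_eq_right (by linarith), neg_add_cancel, hβ0zero,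
      hβ1zero _ (by linarith)]
    linarith [(abs_le.mp (hψ0'bd τ hτI)).1, mul_pos hr hψ0τ]

/-- The lower lateral boundary datum `ρ0 = max{-𝒢, -ψ0}`, with
`𝒢(τ) = A e^{n/γ1} τ`, is, away from the kink `𝒢(τ) = ψ0(τ)`, differentiable and a
subsolution of the penalized equation:
`ρ0' + r ρ0 - β0(ρ0+ψ0) - β1(ρ0-ψ1) ≤ -A e^{n/γ1} ≤ U(x)` for all `x ≥ -n`,
where `U(x) = (ε0-ε1) - A e^{-x/γ1}` and
`A = γ1/(1-γ1)(L1^{(γ1-γ)/γ1} - L0^{(γ1-γ)/γ1})`. -/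
theorem stmt13 (r T q γ α γ1 L0 L1 ε0 ε1 n A ε : ℝ)
    (ψ0 ψ1 ψ0' ψ1' : ℝ → ℝ) (β0 β1 : ℝ → ℝ)
    (hr : 0 < r) (hT : 0 < T) (hq : 0 < q)
    (hγ : 0 < γ) (hγne : γ ≠ 1) (hα : α ∈ Ioo (0:ℝ) 1)
    (hγ1 : γ1 = 1 - α * (1 - γ)) (hL0 : 0 < L0) (hL : L0 < L1)
    (hε1 : 0 ≤ ε1) (hε : ε1 < ε0)
    (hA : A = γ1 / (1 - γ1) * (L1 ^ ((γ1 - γ) / γ1) - L0 ^ ((γ1 - γ) / γ1)))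
    (hψ0pos : ∀ τ ∈ Icc (0:ℝ) T, 0 < ψ0 τ)
    (hψ1pos : ∀ τ ∈ Icc (0:ℝ) T, 0 < ψ1 τ)
    (hψ0deriv : ∀ τ ∈ Icc (0:ℝ) T, HasDerivAt ψ0 (ψ0' τ) τ)
    (hψ1deriv : ∀ τ ∈ Icc (0:ℝ) T, HasDerivAt ψ1 (ψ1' τ) τ)
    (hψ0cont : ContinuousOn ψ0' (Icc 0 T))
    (hψ1cont : ContinuousOn ψ1' (Icc 0 T))
    (hψ0'bd : ∀ τ ∈ Icc (0:ℝ) T, |ψ0' τ| ≤ q)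
    (hεpos : 0 < ε)
    (hεψ1 : ∀ τ ∈ Icc (0:ℝ) T, ε < ψ1 τ)
    (hβ0nonneg : ∀ l : ℝ, 0 ≤ β0 l)
    (hβ0zero : β0 0 = A * Real.exp (n / γ1) + q)
    (hβ1zero : ∀ l : ℝ, l ≤ -ε → β1 l = 0) :
    ∀ τ ∈ Ioo (0:ℝ) T,
      A * Real.exp (n / γ1) * τ ≠ ψ0 τ →
      DifferentiableAt ℝ
        (fun s => max (-(A * Real.exp (n / γ1) * s)) (-ψ0 s)) τ ∧
      deriv (fun s => max (-(A * Real.exp (n / γ1) * s)) (-ψ0 s)) τ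
        + r * max (-(A * Real.exp (n / γ1) * τ)) (-ψ0 τ)
        - β0 (max (-(A * Real.exp (n / γ1) * τ)) (-ψ0 τ) + ψ0 τ)
        - β1 (max (-(A * Real.exp (n / γ1) * τ)) (-ψ0 τ) - ψ1 τ)
      ≤ -(A * Real.exp (n / γ1)) ∧
      ∀ x : ℝ, -n ≤ x →
        -(A * Real.exp (n / γ1)) ≤ (ε0 - ε1) - A * Real.exp (-x / γ1) :=
  stmt13_general r T q γ α γ1 L0 L1 ε0 ε1 n A ε ψ0 ψ1 ψ0' β0 β1 hr hγ hα hγ1 hL0 hL hε hA hψ0pos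
    hψ0deriv hψ0'bd hεψ1 hβ0nonneg hβ0zero hβ1zero
end
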